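/- arXiv:1712.04104 — 6 statements merged into one kernel-verified Lean document; each statement's English description precedes it below -/
import Mathlib

section
/- Deterministic telescoping bound for the 'quadratic steepness' model: Let f be convex on Q with minimizer x*, value f*, and deterministic subgradient oracle satisfying ‖g(x)‖² ≤ L₀² + L₁(f(x) - f*) for all x ∈ Q. For iterates x_{k+1} = P_Q(x_k - α_k g(x_k)) with 0 < L₁ α_k < 2, one has Σ_{k=0}^T α_k(2 - L₁α_k)(f(x_k) - f*) ≤ ‖x_0 - x*‖² + L₀² Σ_{k=0}^T α_k². -/
open RealInnerProductSpace Finset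

theorem stmt_9 {d : ℕ} (f : EuclideanSpace ℝ (Fin d) → ℝ)
    (hconv : ConvexOn ℝ Set.univ f)
    (Q : Set (EuclideanSpace ℝ (Fin d)))
    (hQconv : Convex ℝ Q) (hQclosed : IsClosed Q)
    (P : EuclideanSpace ℝ (Fin d) → EuclideanSpace ℝ (Fin d))
    (hPmem : ∀ z, P z ∈ Q)
    (hPproj : ∀ z, ∀ w ∈ Q, ⟪z - P z, w - P z⟫ ≤ 0)
    (xstar : EuclideanSpace ℝ (Fin d)) (hxstar : xstar ∈ Q)
    (fstar : ℝ) (hfstar : fstar = f xstar)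
    (hmin : ∀ y ∈ Q, f xstar ≤ f y)
    (g : EuclideanSpace ℝ (Fin d) → EuclideanSpace ℝ (Fin d))
    (L₀ L₁ : ℝ)
    (hsub : ∀ z ∈ Q, ∀ y, f y ≥ f z + ⟪g z, y - z⟫)
    (hgbound : ∀ z ∈ Q, ‖g z‖ ^ 2 ≤ L₀ ^ 2 + L₁ * (f z - fstar))
    (T : ℕ) (x : ℕ → EuclideanSpace ℝ (Fin d)) (α : ℕ → ℝ)
    (hx0 : x 0 ∈ Q)
    (hα : ∀ k, k ≤ T → 0 < α k ∧ L₁ * α k < 2)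
    (hupd : ∀ k, k ≤ T → x (k + 1) = P (x k - α k • g (x k))) :
    ∑ k ∈ range (T + 1), α k * (2 - L₁ * α k) * (f (x k) - fstar) ≤
      ‖x 0 - xstar‖ ^ 2 + L₀ ^ 2 * ∑ k ∈ range (T + 1), (α k) ^ 2 := by
  -- projection is distance-decreasing toward points of Q
  have hproj : ∀ z, ∀ w ∈ Q, ‖P z - w‖ ^ 2 ≤ ‖z - w‖ ^ 2 := by
    intro z w hw
    have h1 : z - w = (z - P z) + (P z - w) := by abel
    have h2 : ⟪z - P z, P z - w⟫ = -⟪z - P z, w - P z⟫ := by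
      rw [← inner_neg_right]; congr 1; abel
    rw [h1, norm_add_sq_real]
    nlinarith [hPproj z w hw, sq_nonneg ‖z - P z‖]
  -- membership of iterates
  have hmem : ∀ k, k ≤ T + 1 → x k ∈ Q := by
    intro k hk
    cases k with
    | zero => exact hx0
    | succ n =>
      rw [hupd n (Nat.lt_succ_iff.mp hk)]
      exact hPmem _
  -- per-step inequality
  have hstep : ∀ k, k ≤ T →
      α k * (2 - L₁ * α k) * (f (x k) - fstar) ≤
        ‖x k - xstar‖ ^ 2 - ‖x (k + 1) - xstar‖ ^ 2 + L₀ ^ 2 * α k ^ 2 := by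
    intro k hk
    obtain ⟨hα0, hα2⟩ := hα k hk
    have hxkQ : x k ∈ Q := hmem k (le_trans hk (Nat.le_succ T))
    have hdist : ‖x (k + 1) - xstar‖ ^ 2 ≤ ‖(x k - α k • g (x k)) - xstar‖ ^ 2 := by
      rw [hupd k hk]; exact hproj _ xstar hxstar
    have hexp : ‖(x k - α k • g (x k)) - xstar‖ ^ 2 =
        ‖x k - xstar‖ ^ 2 - 2 * (α k * ⟪g (x k), x k - xstar⟫) +
          α k ^ 2 * ‖g (x k)‖ ^ 2 := by
      have h1 : (x k - α k • g (x k)) - xstar = (x k - xstar) - α k • g (x k) := by abel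
      rw [h1, norm_sub_sq_real, real_inner_smul_right, norm_smul, real_inner_comm]
      simp [Real.norm_eq_abs, mul_pow, sq_abs]
    have hsg : ⟪g (x k), x k - xstar⟫ ≥ f (x k) - fstar := by
      have := hsub (x k) hxkQ xstar
      have h2 : ⟪g (x k), xstar - x k⟫ = -⟪g (x k), x k - xstar⟫ := by
        rw [← inner_neg_right]; congr 1; abel
      rw [h2] at this
      rw [hfstar]; linarith
    have hgb := hgbound (x k) hxkQ
    nlinarith [sq_nonneg (α k), mul_le_mul_of_nonneg_left hgb (sq_nonneg (α k))]
  calc ∑ k ∈ range (T + 1), α k * (2 - L₁ * α k) * (f (x k) - fstar)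
      ≤ ∑ k ∈ range (T + 1),
          (‖x k - xstar‖ ^ 2 - ‖x (k + 1) - xstar‖ ^ 2 + L₀ ^ 2 * α k ^ 2) := by
        apply Finset.sum_le_sum
        intro k hk
        exact hstep k (Nat.lt_succ_iff.mp (Finset.mem_range.mp hk))
    _ = (‖x 0 - xstar‖ ^ 2 - ‖x (T + 1) - xstar‖ ^ 2) +
          L₀ ^ 2 * ∑ k ∈ range (T + 1), α k ^ 2 := by
        rw [Finset.sum_add_distrib, Finset.sum_range_sub' (fun k => ‖x k - xstar‖ ^ 2),
          Finset.mul_sum]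
    _ ≤ ‖x 0 - xstar‖ ^ 2 + L₀ ^ 2 * ∑ k ∈ range (T + 1), α k ^ 2 := by
        nlinarith [sq_nonneg ‖x (T + 1) - xstar‖]
end

section
/- Strongly convex extended rate (deterministic instance): Let f be μ-strongly convex on Q with minimizer x*, value f*, and subgradient oracle satisfying ‖g(x)‖² ≤ L₀² + L₁(f(x) - f*). With step sizes α_k = 2/(μ(k+2) + L₁²/(μ(k+1))) and iterates x_{k+1} = P_Q(x_k - α_k g(x_k)), one has Σ_{k=0}^T (k+1)(2 - L₁α_k)(f(x_k) - f*) ≤ (L₁²/(2μ))‖x_0 - x*‖² + 2L₀²(T+1)/μ. -/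
set_option maxHeartbeats 1000000


open RealInnerProductSpace Finset

theorem stmt_11 {d : ℕ} (f : EuclideanSpace ℝ (Fin d) → ℝ)
    (Q : Set (EuclideanSpace ℝ (Fin d)))
    (hQconv : Convex ℝ Q) (hQclosed : IsClosed Q)
    (P : EuclideanSpace ℝ (Fin d) → EuclideanSpace ℝ (Fin d))
    (hPmem : ∀ z, P z ∈ Q)
    (hPproj : ∀ z, ∀ w ∈ Q, ⟪z - P z, w - P z⟫ ≤ 0)
    (μ : ℝ) (hμ : 0 < μ)
    (g : EuclideanSpace ℝ (Fin d) → EuclideanSpace ℝ (Fin d))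
    (hstrong : ∀ z ∈ Q, ∀ y ∈ Q, f y ≥ f z + ⟪g z, y - z⟫ + (μ / 2) * ‖y - z‖ ^ 2)
    (xstar : EuclideanSpace ℝ (Fin d)) (hxstar : xstar ∈ Q)
    (fstar : ℝ) (hfstar : fstar = f xstar)
    (hmin : ∀ y ∈ Q, f xstar ≤ f y)
    (L₀ L₁ : ℝ) (hL₁ : 0 ≤ L₁)
    (hgbound : ∀ z ∈ Q, ‖g z‖ ^ 2 ≤ L₀ ^ 2 + L₁ * (f z - fstar))
    (T : ℕ) (x : ℕ → EuclideanSpace ℝ (Fin d)) (α : ℕ → ℝ)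
    (hx0 : x 0 ∈ Q)
    (hα : ∀ k : ℕ, α k = 2 / (μ * (k + 2) + L₁ ^ 2 / (μ * (k + 1))))
    (hupd : ∀ k, k ≤ T → x (k + 1) = P (x k - α k • g (x k))) :
    ∑ k ∈ range (T + 1), ((k : ℝ) + 1) * (2 - L₁ * α k) * (f (x k) - fstar) ≤
      (L₁ ^ 2 / (2 * μ)) * ‖x 0 - xstar‖ ^ 2 + 2 * L₀ ^ 2 * (T + 1) / μ := by
  have hmemx : ∀ k, k ≤ T + 1 → x k ∈ Q := by
    intro k hk
    induction k with
    | zero => exact hx0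
    | succ n ih =>
      rw [hupd n (by omega)]
      exact hPmem _
  set r : ℕ → ℝ := fun k => ‖x k - xstar‖ ^ 2 with hr
  set a : ℕ → ℝ := fun k => μ * k * (k + 1) / 2 + L₁ ^ 2 / (2 * μ) with ha
  have hrnonneg : ∀ k, 0 ≤ r k := fun k => sq_nonneg _
  have hrdef : ∀ k, r k = ‖x k - xstar‖ ^ 2 := fun k => rfl
  have hanonneg : ∀ k, 0 ≤ a k := by
    intro k
    have : (0:ℝ) ≤ (k:ℝ) := Nat.cast_nonneg k
    simp only [ha]
    positivity
  have he2 : ∀ k : ℕ, a (k + 1) * α k = (k:ℝ) + 1 := by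
    intro k
    have hk1 : (0:ℝ) < (k:ℝ) + 1 := by positivity
    have hD : 0 < μ * ((k:ℝ) + 2) + L₁ ^ 2 / (μ * ((k:ℝ) + 1)) := by positivity
    simp only [ha, hα]
    push_cast
    field_simp
    ring
  have hβ2 : ∀ k : ℕ, a (k + 1) - ((k:ℝ) + 1) * μ = a k := by
    intro k
    simp only [ha]; push_cast; ring
  have h1 : a 0 = L₁ ^ 2 / (2 * μ) := by simp [ha]
  clear_value a r
  have key : ∀ k ∈ range (T + 1),
      ((k : ℝ) + 1) * (2 - L₁ * α k) * (f (x k) - fstar) ≤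
        a k * r k - a (k + 1) * r (k + 1) + 2 * L₀ ^ 2 / μ := by
    intro k hk
    have hkT : k ≤ T := by simpa [Nat.lt_succ_iff] using Finset.mem_range.mp hk
    have hxkQ : x k ∈ Q := hmemx k (by omega)
    have hk1 : (0:ℝ) < (k:ℝ) + 1 := by positivity
    have hD : 0 < μ * ((k:ℝ) + 2) + L₁ ^ 2 / (μ * ((k:ℝ) + 1)) := by positivity
    have hαpos : 0 < α k := by rw [hα]; positivity
    have hΔ : 0 ≤ f (x k) - fstar := by
      rw [hfstar]; linarith [hmin (x k) hxkQ]
    -- strong convexity gives inner product bound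
    have hsc := hstrong (x k) hxkQ xstar hxstar
    rw [show xstar - x k = -(x k - xstar) from by abel, inner_neg_right,
      norm_neg] at hsc
    have hip : f (x k) - fstar + μ / 2 * r k ≤ ⟪g (x k), x k - xstar⟫ := by
      rw [hrdef k, hfstar]; linarith
    have hgb := hgbound (x k) hxkQ
    -- contraction of the projection
    set z := x k - α k • g (x k) with hz
    have hproj := hPproj z xstar hxstar
    rw [show xstar - P z = -(P z - xstar) from by abel, inner_neg_right] at hproj
    have hsplit : z - P z + (P z - xstar) = z - xstar := by abel
    have hns := norm_add_sq_real (z - P z) (P z - xstar)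
    rw [hsplit] at hns
    have hcontr : r (k + 1) ≤ ‖z - xstar‖ ^ 2 := by
      have hx1 : x (k + 1) = P z := hupd k hkT
      rw [hrdef, hx1]
      nlinarith [sq_nonneg ‖z - P z‖]
    have hz2 : z - xstar = (x k - xstar) - α k • g (x k) := by simp only [hz]; abel
    have hexp : ‖z - xstar‖ ^ 2 =
        r k - 2 * α k * ⟪g (x k), x k - xstar⟫ + α k ^ 2 * ‖g (x k)‖ ^ 2 := by
      rw [hz2, norm_sub_sq_real, real_inner_smul_right, real_inner_comm,
        norm_smul, Real.norm_eq_abs, mul_pow, sq_abs]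
      rw [hrdef k]; ring
    have hstep : r (k + 1) ≤ r k - 2 * α k * (f (x k) - fstar + μ / 2 * r k)
        + α k ^ 2 * (L₀ ^ 2 + L₁ * (f (x k) - fstar)) := by
      have h1 := mul_le_mul_of_nonneg_left hip (by positivity : (0:ℝ) ≤ 2 * α k)
      have h2 := mul_le_mul_of_nonneg_left hgb (sq_nonneg (α k))
      nlinarith [hcontr, hexp]
    -- algebraic identities for the coefficients
    have e2 : a (k + 1) * α k = (k:ℝ) + 1 := he2 k
    have h3 : ((k:ℝ) + 1) * α k * L₀ ^ 2 ≤ 2 * L₀ ^ 2 / μ := by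
      have hαle : ((k:ℝ) + 1) * α k ≤ 2 / μ := by
        rw [hα, mul_div_assoc', div_le_div_iff₀ hD hμ]
        have hnn : 0 ≤ L₁ ^ 2 / (μ * ((k:ℝ) + 1)) := by positivity
        linarith
      have := mul_le_mul_of_nonneg_right hαle (sq_nonneg L₀)
      calc ((k:ℝ) + 1) * α k * L₀ ^ 2 ≤ 2 / μ * L₀ ^ 2 := this
        _ = 2 * L₀ ^ 2 / μ := by ring
    -- multiply hstep by a (k+1) ≥ 0 and substitute
    have hstep2 : a (k + 1) * r (k + 1) ≤
        a (k + 1) * r k - 2 * ((k:ℝ) + 1) * (f (x k) - fstar)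
          - ((k:ℝ) + 1) * μ * r k + ((k:ℝ) + 1) * α k * L₀ ^ 2
          + ((k:ℝ) + 1) * α k * L₁ * (f (x k) - fstar) := by
      calc a (k + 1) * r (k + 1)
          ≤ a (k + 1) * (r k - 2 * α k * (f (x k) - fstar + μ / 2 * r k)
              + α k ^ 2 * (L₀ ^ 2 + L₁ * (f (x k) - fstar))) :=
            mul_le_mul_of_nonneg_left hstep (hanonneg _)
        _ = a (k + 1) * r k - 2 * (a (k + 1) * α k) * (f (x k) - fstar)
              - (a (k + 1) * α k) * μ * r k
              + (a (k + 1) * α k) * α k * L₀ ^ 2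
              + (a (k + 1) * α k) * α k * L₁ * (f (x k) - fstar) := by ring
        _ = _ := by rw [e2]
    have e3 : a (k + 1) * r k - ((k:ℝ) + 1) * μ * r k = a k * r k := by
      rw [← hβ2 k]; ring
    have hL : ((k:ℝ) + 1) * (2 - L₁ * α k) * (f (x k) - fstar)
        = 2 * ((k:ℝ) + 1) * (f (x k) - fstar)
          - ((k:ℝ) + 1) * α k * L₁ * (f (x k) - fstar) := by ring
    rw [hL]
    linarith [hstep2, e3, h3]
  calc ∑ k ∈ range (T + 1), ((k : ℝ) + 1) * (2 - L₁ * α k) * (f (x k) - fstar)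
      ≤ ∑ k ∈ range (T + 1), (a k * r k - a (k + 1) * r (k + 1) + 2 * L₀ ^ 2 / μ) :=
        Finset.sum_le_sum key
    _ = (a 0 * r 0 - a (T + 1) * r (T + 1)) + ((T:ℝ) + 1) * (2 * L₀ ^ 2 / μ) := by
        rw [Finset.sum_add_distrib, Finset.sum_range_sub' (fun k => a k * r k),
          Finset.sum_const, Finset.card_range]
        push_cast; ring
    _ ≤ (L₁ ^ 2 / (2 * μ)) * ‖x 0 - xstar‖ ^ 2 + 2 * L₀ ^ 2 * (T + 1) / μ := by
        have h2 : 0 ≤ a (T + 1) * r (T + 1) := mul_nonneg (hanonneg _) (hrnonneg _)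
        have h4 : r 0 = ‖x 0 - xstar‖ ^ 2 := hrdef 0
        have h5 : ((T:ℝ) + 1) * (2 * L₀ ^ 2 / μ) = 2 * L₀ ^ 2 * ((T:ℝ) + 1) / μ := by ring
        rw [h1, h4]
        linarith
end

section
/- The step sizes α_k = 4/(μ(k+2) + 4L₁²/(μ(k+1))) satisfy both the recurrence (k+1)α_k^{-1} = (k+2)(α_{k+1}^{-1} - μ/2) and the bound L₁α_k ≤ 1 for all k ≥ 0. -/
theorem stmt_14 (μ L₁ : ℝ) (hμ : 0 < μ) (hL₁ : 0 ≤ L₁) (α : ℕ → ℝ)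
    (hα : ∀ k : ℕ, α k = 4 / (μ * (k + 2) + 4 * L₁ ^ 2 / (μ * (k + 1)))) :
    (∀ k : ℕ, ((k : ℝ) + 1) * (α k)⁻¹ = ((k : ℝ) + 2) * ((α (k + 1))⁻¹ - μ / 2)) ∧
      (∀ k : ℕ, L₁ * α k ≤ 1) := by
  have hk1 : ∀ k : ℕ, (0:ℝ) < μ * (k + 1) := by
    intro k
    positivity
  have hD : ∀ k : ℕ, (0:ℝ) < μ * (k + 2) + 4 * L₁ ^ 2 / (μ * (k + 1)) := by
    intro k
    have := hk1 k
    positivity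
  constructor
  · intro k
    rw [hα k, hα (k + 1)]
    push_cast
    have h1 := (hk1 k).ne'
    have h2 : (μ * ((k:ℝ) + 1 + 1)) ≠ 0 := by positivity
    have h3 := (hD k).ne'
    have h4 : (μ * ((k:ℝ) + 1 + 2) + 4 * L₁ ^ 2 / (μ * ((k:ℝ) + 1 + 1))) ≠ 0 := by
      have : (0:ℝ) < μ * ((k:ℝ) + 1 + 1) := by positivity
      positivity
    field_simp
    ring
  · intro k
    rw [hα k]
    have ha := hk1 k
    have key : 4 * L₁ ≤ μ * (k + 2) + 4 * L₁ ^ 2 / (μ * (k + 1)) := by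
      have h0 : (0:ℝ) ≤ (μ * (k + 1) - 2 * L₁) ^ 2 / (μ * (k + 1)) := by positivity
      have expand : μ * ((k:ℝ) + 1) + 4 * L₁ ^ 2 / (μ * (k + 1)) - 4 * L₁
          = (μ * (k + 1) - 2 * L₁) ^ 2 / (μ * (k + 1)) := by
        field_simp
        ring
      nlinarith
    calc L₁ * (4 / (μ * (k + 2) + 4 * L₁ ^ 2 / (μ * (k + 1))))
        = (4 * L₁) / (μ * (k + 2) + 4 * L₁ ^ 2 / (μ * (k + 1))) := by ring
      _ ≤ 1 := (div_le_one (hD k)).mpr key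
end

section
/- Forward direction of the quadratic-growth characterization: If a convex function f on an open convex set U ⊆ ℝ^d satisfies ‖g‖² ≤ L₀² + L₁(f(x) - m) for every x ∈ U and every subgradient g ∈ ∂f(x), where m = inf_{x'∈U} f(x'), then for all x, y ∈ U: f(y) ≤ f(x) + (L₁/4)‖y - x‖² + ‖y - x‖·√(L₁(f(x) - m) + L₀²). -/
open RealInnerProductSpace


theorem exists_subgradient' {d : ℕ} {U : Set (EuclideanSpace ℝ (Fin d))}
    (hUopen : IsOpen U) (hUconv : Convex ℝ U)
    {f : EuclideanSpace ℝ (Fin d) → ℝ} (hconv : ConvexOn ℝ U f)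
    {x : EuclideanSpace ℝ (Fin d)} (hx : x ∈ U) :
    ∃ g : EuclideanSpace ℝ (Fin d), ∀ y ∈ U, f y ≥ f x + ⟪g, y - x⟫ := by
  classical
  have hcont : ContinuousOn f U := hconv.continuousOn hUopen
  set S : Set (EuclideanSpace ℝ (Fin d) × ℝ) := {p | p.1 ∈ U ∧ f p.1 < p.2} with hS
  have hSopen : IsOpen S := by
    have hF : ContinuousOn (fun p : EuclideanSpace ℝ (Fin d) × ℝ => p.2 - f p.1)
        (U ×ˢ (Set.univ : Set ℝ)) :=
      (continuous_snd.continuousOn).sub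
        (hcont.comp continuous_fst.continuousOn (fun p hp => hp.1))
    have h2 := hF.isOpen_inter_preimage (hUopen.prod isOpen_univ) (isOpen_Ioi (a := (0:ℝ)))
    convert h2 using 1
    ext p
    simp only [hS, Set.mem_setOf_eq, Set.mem_inter_iff, Set.mem_preimage, Set.mem_prod,
      Set.mem_univ, and_true, Set.mem_Ioi, sub_pos]
  have hSconv : Convex ℝ S := by
    rintro p ⟨hp1, hp2⟩ q ⟨hq1, hq2⟩ a b ha hb hab
    refine ⟨hUconv hp1 hq1 ha hb hab, ?_⟩
    have h := hconv.2 hp1 hq1 ha hb hab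
    rcases eq_or_lt_of_le ha with rfl | ha'
    · simp only [zero_add] at hab; subst hab
      simpa using hq2
    · calc f (a • p.1 + b • q.1) ≤ a * f p.1 + b * f q.1 := h
        _ < a * p.2 + b * q.2 := by
          have h1 : a * f p.1 < a * p.2 := by nlinarith
          have h2 : b * f q.1 ≤ b * q.2 := by nlinarith
          exact add_lt_add_of_lt_of_le h1 h2
  have hxS : (x, f x) ∉ S := by simp [hS]
  obtain ⟨φ, hφ⟩ := geometric_hahn_banach_open_point hSconv hSopen hxS
  set c : ℝ := φ (0, 1) with hc
  have hsplit : ∀ (y : EuclideanSpace ℝ (Fin d)) (t : ℝ), φ (y, t) = φ (y, 0) + t * c := by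
    intro y t
    have h3 : ((y, t) : EuclideanSpace ℝ (Fin d) × ℝ) = (y, 0) + t • ((0 : EuclideanSpace ℝ (Fin d)), (1 : ℝ)) := by
      simp [Prod.ext_iff]
    rw [h3, map_add, map_smul, smul_eq_mul]
  have hcneg : c < 0 := by
    have h1 : φ (x, f x + 1) < φ (x, f x) := hφ _ ⟨hx, by norm_num⟩
    rw [hsplit x (f x + 1), hsplit x (f x)] at h1
    linarith
  have key : ∀ y ∈ U, φ (y, 0) + f y * c ≤ φ (x, 0) + f x * c := by
    intro y hy
    have h2 : ∀ ε : ℝ, 0 < ε → φ (y, 0) + (f y + ε) * c < φ (x, 0) + f x * c := by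
      intro ε hε
      have h4 := hφ (y, f y + ε) ⟨hy, by simpa using hε⟩
      rwa [hsplit y (f y + ε), hsplit x (f x)] at h4
    by_contra hcon
    push_neg at hcon
    set δ := φ (y, 0) + f y * c - (φ (x, 0) + f x * c) with hδ
    have hδpos : 0 < δ := by linarith
    have hcpos : 0 < -c := by linarith
    have hεpos : 0 < δ / (-c) := div_pos hδpos hcpos
    have h5 := h2 (δ / (-c)) hεpos
    have h6 : (δ / (-c)) * c = -δ := by rw [div_neg, neg_mul, div_mul_cancel₀ δ hcneg.ne]
    nlinarith
  refine ⟨(InnerProductSpace.toDual ℝ (EuclideanSpace ℝ (Fin d))).symm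
    ((-1/c) • (φ.comp (ContinuousLinearMap.inl ℝ (EuclideanSpace ℝ (Fin d)) ℝ))), ?_⟩
  intro y hy
  have hrep : ∀ v : EuclideanSpace ℝ (Fin d), ⟪(InnerProductSpace.toDual ℝ (EuclideanSpace ℝ (Fin d))).symm
      ((-1/c) • (φ.comp (ContinuousLinearMap.inl ℝ (EuclideanSpace ℝ (Fin d)) ℝ))), v⟫ = (-1/c) * φ (v, 0) := by
    intro v
    rw [InnerProductSpace.toDual_symm_apply]
    simp [ContinuousLinearMap.inl]
  rw [ge_iff_le, hrep (y - x)]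
  have hmap : φ ((y - x : EuclideanSpace ℝ (Fin d)), (0:ℝ)) = φ (y, 0) - φ (x, 0) := by
    have h7 : ((y - x : EuclideanSpace ℝ (Fin d)), (0:ℝ)) = (y, (0:ℝ)) - (x, (0:ℝ)) := by
      simp [Prod.ext_iff]
    rw [h7, map_sub]
  rw [hmap]
  have h8 := key y hy
  have h10 : f x - f y ≤ (φ (y, 0) - φ (x, 0)) / c :=
    (le_div_iff_of_neg hcneg).2 (by linarith)
  have h11 : (-1/c) * (φ (y, 0) - φ (x, 0)) = -((φ (y, 0) - φ (x, 0))/c) := by ring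
  linarith

set_option maxHeartbeats 1000000 in
theorem chain_bound {d : ℕ} {U : Set (EuclideanSpace ℝ (Fin d))}
    (hUopen : IsOpen U) (hUconv : Convex ℝ U)
    {f : EuclideanSpace ℝ (Fin d) → ℝ} (hconv : ConvexOn ℝ U f)
    {L₀ L₁ : ℝ} (hL₀ : 0 ≤ L₀) (hL₁ : 0 ≤ L₁)
    {m : ℝ} (hm : IsGLB (f '' U) m)
    (hsubbound : ∀ x ∈ U, ∀ g : EuclideanSpace ℝ (Fin d),
      (∀ y ∈ U, f y ≥ f x + ⟪g, y - x⟫) → ‖g‖ ^ 2 ≤ L₀ ^ 2 + L₁ * (f x - m))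
    {x : EuclideanSpace ℝ (Fin d)} (hx : x ∈ U)
    {y : EuclideanSpace ℝ (Fin d)} (hy : y ∈ U)
    (n : ℕ) (hn : 0 < n) (L₀' : ℝ) (hL₀'pos : 0 < L₀') (hL₀'le : L₀ ≤ L₀') :
    f y ≤ f x + ‖y - x‖ * Real.sqrt (L₁ * (f x - m) + L₀' ^ 2)
      + L₁ * ‖y - x‖ ^ 2 * ((n : ℝ) + 1) / (4 * n)
      + L₁ ^ 2 * ‖y - x‖ ^ 3 * ((n : ℝ) + 1) / (16 * (n : ℝ) ^ 2 * L₀') := by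
  classical
  set r : ℝ := ‖y - x‖ with hr
  have hrnn : 0 ≤ r := norm_nonneg _
  set N : ℝ := (n : ℝ) with hN
  have hNpos : 0 < N := by rw [hN]; exact_mod_cast hn
  set z : ℕ → EuclideanSpace ℝ (Fin d) := fun i => x + ((i : ℝ) / N) • (y - x) with hz
  have hzz : ∀ i : ℕ, z i = x + ((i : ℝ) / N) • (y - x) := fun i => rfl
  have hz0 : z 0 = x := by rw [hzz]; simp
  have hzn : z n = y := by
    rw [hzz, hN, div_self (by exact_mod_cast hn.ne' : ((n:ℝ) ≠ 0)), one_smul]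
    abel
  have hzU : ∀ i, i ≤ n → z i ∈ U := by
    intro i hi
    have ht0 : (0 : ℝ) ≤ (i : ℝ) / N := by positivity
    have ht1 : (i : ℝ) / N ≤ 1 := by
      rw [div_le_one hNpos, hN]; exact_mod_cast hi
    have hmem := hUconv hx hy (by linarith : (0:ℝ) ≤ 1 - (i : ℝ)/N) ht0 (by ring)
    convert hmem using 1
    rw [hzz]
    module
  set a : ℕ → ℝ := fun i => f (z i) - m with ha
  have haa : ∀ i : ℕ, a i = f (z i) - m := fun i => rfl
  have hann : ∀ i, i ≤ n → 0 ≤ a i := by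
    intro i hi
    have h1 : m ≤ f (z i) := hm.1 ⟨z i, hzU i hi, rfl⟩
    rw [haa]; linarith
  set s : ℕ → ℝ := fun i => Real.sqrt (L₀' ^ 2 + L₁ * a i) with hs
  have hss : ∀ i : ℕ, s i = Real.sqrt (L₀' ^ 2 + L₁ * a i) := fun i => rfl
  have hsnn : ∀ i, 0 ≤ s i := fun i => Real.sqrt_nonneg _
  have hssq : ∀ i, i ≤ n → s i ^ 2 = L₀' ^ 2 + L₁ * a i := by
    intro i hi
    rw [hss]
    exact Real.sq_sqrt (by nlinarith [hann i hi, mul_nonneg hL₁ (hann i hi), sq_nonneg L₀'])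
  have hsL : ∀ i, i ≤ n → L₀' ≤ s i := by
    intro i hi
    rw [hss, Real.le_sqrt hL₀'pos.le
      (by nlinarith [mul_nonneg hL₁ (hann i hi), sq_nonneg L₀'])]
    nlinarith [mul_nonneg hL₁ (hann i hi)]
  have hstep : ∀ i, i < n → a (i + 1) ≤ a i + (r / N) * s (i + 1) := by
    intro i hi
    obtain ⟨g, hg⟩ := exists_subgradient' hUopen hUconv hconv (hzU (i+1) hi)
    have h1 := hg (z i) (hzU i hi.le)
    have hdiff : z i - z (i + 1) = (-(1 / N)) • (y - x) := by
      rw [hzz i, hzz (i+1)]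
      have h5 : x + ((i : ℝ) / N) • (y - x) - (x + (((i+1 : ℕ) : ℝ) / N) • (y - x))
          = (((i : ℝ) / N) - (((i : ℝ)+1) / N)) • (y - x) := by push_cast; module
      rw [h5]
      congr 1
      field_simp
      ring
    have hnorm : ‖z i - z (i + 1)‖ = r / N := by
      rw [hdiff, norm_smul, Real.norm_eq_abs, abs_neg,
        abs_of_pos (by positivity : (0:ℝ) < 1/N), hr]
      ring
    have hinner : -(‖g‖ * (r / N)) ≤ ⟪g, z i - z (i + 1)⟫ := by
      have h6 := abs_real_inner_le_norm g (z i - z (i + 1))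
      rw [hnorm] at h6
      cases' abs_le.mp h6 with h _
      linarith
    have hgn : ‖g‖ ≤ s (i + 1) := by
      have hb := hsubbound (z (i+1)) (hzU (i+1) hi) g hg
      have h7 : ‖g‖ ^ 2 ≤ L₀' ^ 2 + L₁ * a (i+1) := by
        have h8 : L₀ ^ 2 ≤ L₀' ^ 2 := by nlinarith
        rw [haa]
        linarith
      rw [hss, Real.le_sqrt (norm_nonneg g)
        (by nlinarith [mul_nonneg hL₁ (hann (i+1) hi), sq_nonneg L₀'])]
      exact h7
    have h2 : f (z (i+1)) ≤ f (z i) + ‖g‖ * (r / N) := by linarith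
    have h3 : ‖g‖ * (r / N) ≤ s (i+1) * (r / N) :=
      mul_le_mul_of_nonneg_right hgn (by positivity)
    rw [haa (i+1), haa i]
    linarith
  set c : ℝ := L₁ * r / (2 * N) with hc
  have hcnn : 0 ≤ c := by rw [hc]; positivity
  set D : ℝ := c ^ 2 / (2 * L₀') with hD
  have hDnn : 0 ≤ D := by rw [hD]; positivity
  have hDeq : 2 * L₀' * D = c ^ 2 := by rw [hD]; field_simp
  set K : ℝ := c + D with hK
  have hKnn : 0 ≤ K := by rw [hK]; positivity
  have hsstep : ∀ i, i < n → s (i + 1) ≤ s i + K := by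
    intro i hi
    have h1 : s (i+1) ^ 2 ≤ s i ^ 2 + 2 * c * s (i+1) := by
      rw [hssq (i+1) hi, hssq i hi.le]
      have h9 := mul_le_mul_of_nonneg_left (hstep i hi) hL₁
      have hceq : L₁ * (r / N) = 2 * c := by rw [hc]; field_simp
      have expand : L₁ * (a i + r / N * s (i + 1)) = L₁ * a i + 2 * c * s (i + 1) := by
        rw [mul_add, ← mul_assoc, hceq]
      rw [expand] at h9
      linarith
    have h2 : (s (i+1) - c) ^ 2 ≤ s i ^ 2 + c ^ 2 := by nlinarith
    have h3 : s i ^ 2 + c ^ 2 ≤ (s i + D) ^ 2 := by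
      nlinarith [mul_le_mul_of_nonneg_right (hsL i hi.le) hDnn, sq_nonneg D]
    rw [hK]
    nlinarith [hsnn i, hsnn (i+1)]
  have hsbound : ∀ j, j ≤ n → s j ≤ s 0 + (j : ℝ) * K := by
    intro j
    induction j with
    | zero => intro _; simp
    | succ j ih =>
      intro hj
      have hjlt : j < n := hj
      have h1 := ih hjlt.le
      have h2 := hsstep j hjlt
      push_cast
      linarith
  have habound : ∀ j, j ≤ n →
      a j ≤ a 0 + (r / N) * ((j : ℝ) * s 0 + K * ((j : ℝ) * ((j : ℝ) + 1) / 2)) := by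
    intro j
    induction j with
    | zero => intro _; simp
    | succ j ih =>
      intro hj
      have hjlt : j < n := hj
      have h1 := hstep j hjlt
      have h2 := hsbound (j+1) hj
      have h3 := ih hjlt.le
      have h4 : (r / N) * s (j+1) ≤ (r / N) * (s 0 + ((j:ℝ)+1) * K) := by
        have h5 : s (j+1) ≤ s 0 + ((j:ℝ)+1) * K := by push_cast at h2 ⊢; linarith
        exact mul_le_mul_of_nonneg_left h5 (by positivity)
      push_cast
      push_cast at h3
      nlinarith
  have hfin := habound n le_rfl
  have e1 : a n = f y - m := by rw [haa, hzn]
  have e2 : a 0 = f x - m := by rw [haa, hz0]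
  have e3 : s 0 = Real.sqrt (L₁ * (f x - m) + L₀' ^ 2) := by
    rw [hss, haa, hz0, add_comm]
  rw [e1, e2, e3] at hfin
  have halg : (r / N) * ((N : ℝ) * Real.sqrt (L₁ * (f x - m) + L₀' ^ 2)
        + K * ((N : ℝ) * ((N : ℝ) + 1) / 2))
      = r * Real.sqrt (L₁ * (f x - m) + L₀' ^ 2)
        + L₁ * r ^ 2 * ((N : ℝ) + 1) / (4 * N)
        + L₁ ^ 2 * r ^ 3 * ((N : ℝ) + 1) / (16 * (N : ℝ) ^ 2 * L₀') := by
    rw [hK, hD, hc]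
    field_simp
    ring
  rw [halg] at hfin
  linarith

lemma sqrt_add_le'' (A B : ℝ) (hA : 0 ≤ A) (hB : 0 ≤ B) :
    Real.sqrt (A + B) ≤ Real.sqrt A + Real.sqrt B := by
  have h : A + B ≤ (Real.sqrt A + Real.sqrt B) ^ 2 := by
    nlinarith [Real.sq_sqrt hA, Real.sq_sqrt hB, Real.sqrt_nonneg A, Real.sqrt_nonneg B,
      mul_nonneg (Real.sqrt_nonneg A) (Real.sqrt_nonneg B)]
  have h2 := Real.sqrt_le_sqrt h
  rwa [Real.sqrt_sq (by positivity)] at h2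

set_option maxHeartbeats 1000000 in
theorem stmt_15 {d : ℕ} (U : Set (EuclideanSpace ℝ (Fin d)))
    (hUopen : IsOpen U) (hUconv : Convex ℝ U)
    (f : EuclideanSpace ℝ (Fin d) → ℝ) (hconv : ConvexOn ℝ U f)
    (L₀ L₁ : ℝ) (hL₀ : 0 ≤ L₀) (hL₁ : 0 ≤ L₁)
    (m : ℝ) (hm : IsGLB (f '' U) m)
    (hsubbound : ∀ x ∈ U, ∀ g : EuclideanSpace ℝ (Fin d),
      (∀ y ∈ U, f y ≥ f x + ⟪g, y - x⟫) → ‖g‖ ^ 2 ≤ L₀ ^ 2 + L₁ * (f x - m)) :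
    ∀ x ∈ U, ∀ y ∈ U,
      f y ≤ f x + (L₁ / 4) * ‖y - x‖ ^ 2 +
        ‖y - x‖ * Real.sqrt (L₁ * (f x - m) + L₀ ^ 2) := by
  intro x hx y hy
  have hB : 0 ≤ f x - m := sub_nonneg.2 (hm.1 ⟨x, hx, rfl⟩)
  have hA : 0 ≤ L₁ * (f x - m) := mul_nonneg hL₁ hB
  rcases eq_or_lt_of_le (norm_nonneg (y - x)) with h0 | hrpos
  · have hyx : y = x := by
      have h1 : y - x = 0 := norm_eq_zero.mp h0.symm
      have := sub_eq_zero.mp h1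
      exact this
    subst hyx
    simp
  · set r : ℝ := ‖y - x‖ with hr
    have hrnn : 0 ≤ r := norm_nonneg _
    apply le_of_forall_pos_le_add
    intro ε hε
    set δ : ℝ := min 1 (ε ^ 2 / (4 * r ^ 2 * (2 * L₀ + 1))) with hδ
    have hδpos : 0 < δ := lt_min one_pos (by positivity)
    have hδ1 : δ ≤ 1 := min_le_left _ _
    have hδ2 : δ ≤ ε ^ 2 / (4 * r ^ 2 * (2 * L₀ + 1)) := min_le_right _ _
    set L₀' : ℝ := L₀ + δ with hL₀'
    have hL₀'pos : 0 < L₀' := by rw [hL₀']; linarith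
    have hL₀'le : L₀ ≤ L₀' := by rw [hL₀']; linarith
    -- bound on the sqrt term
    have hsq1 : Real.sqrt (L₁ * (f x - m) + L₀' ^ 2)
        ≤ Real.sqrt (L₁ * (f x - m) + L₀ ^ 2) + ε / (2 * r) := by
      have step1 : L₁ * (f x - m) + L₀' ^ 2
          ≤ (L₁ * (f x - m) + L₀ ^ 2) + (2 * L₀ + 1) * δ := by
        rw [hL₀']; nlinarith [hδ1, hδpos]
      have step2 : Real.sqrt ((L₁ * (f x - m) + L₀ ^ 2) + (2 * L₀ + 1) * δ)
          ≤ Real.sqrt (L₁ * (f x - m) + L₀ ^ 2) + Real.sqrt ((2 * L₀ + 1) * δ) :=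
        sqrt_add_le'' _ _ (by positivity) (by positivity)
      have step3 : Real.sqrt ((2 * L₀ + 1) * δ) ≤ ε / (2 * r) := by
        rw [show ε / (2 * r) = Real.sqrt ((ε / (2 * r)) ^ 2) from
          (Real.sqrt_sq (by positivity)).symm]
        apply Real.sqrt_le_sqrt
        have h1 : (2 * L₀ + 1) * δ ≤ (2 * L₀ + 1) * (ε ^ 2 / (4 * r ^ 2 * (2 * L₀ + 1))) :=
          mul_le_mul_of_nonneg_left hδ2 (by positivity)
        have h2 : (2 * L₀ + 1) * (ε ^ 2 / (4 * r ^ 2 * (2 * L₀ + 1))) = (ε / (2 * r)) ^ 2 := by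
          field_simp
          ring
        linarith
      calc Real.sqrt (L₁ * (f x - m) + L₀' ^ 2)
          ≤ Real.sqrt ((L₁ * (f x - m) + L₀ ^ 2) + (2 * L₀ + 1) * δ) :=
            Real.sqrt_le_sqrt step1
        _ ≤ _ := by linarith
    -- choose n
    obtain ⟨n, hngt⟩ := exists_nat_gt (max (L₁ * r ^ 2 / ε) (L₁ ^ 2 * r ^ 3 / (2 * ε * L₀')))
    have hn1 : L₁ * r ^ 2 / ε < (n : ℝ) := lt_of_le_of_lt (le_max_left _ _) hngt
    have hn2 : L₁ ^ 2 * r ^ 3 / (2 * ε * L₀') < (n : ℝ) := lt_of_le_of_lt (le_max_right _ _) hngt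
    have hnpos : 0 < n := by
      have h1 : (0:ℝ) ≤ L₁ * r ^ 2 / ε := by positivity
      have h2 : (0:ℝ) < (n : ℝ) := lt_of_le_of_lt h1 hn1
      exact_mod_cast h2
    have hmain := chain_bound hUopen hUconv hconv hL₀ hL₁ hm hsubbound hx hy n hnpos
      L₀' hL₀'pos hL₀'le
    rw [← hr] at hmain
    have hNpos : (0:ℝ) < (n:ℝ) := by exact_mod_cast hnpos
    have hT2 : L₁ * r ^ 2 * ((n:ℝ) + 1) / (4 * n) ≤ L₁ * r ^ 2 / 4 + ε / 4 := by
      rw [div_le_iff₀ (by positivity : (0:ℝ) < 4 * (n:ℝ))]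
      have h1 : L₁ * r ^ 2 < ε * (n:ℝ) := by
        rw [div_lt_iff₀ hε] at hn1; linarith
      nlinarith
    have hT3 : L₁ ^ 2 * r ^ 3 * ((n:ℝ) + 1) / (16 * (n:ℝ) ^ 2 * L₀') ≤ ε / 4 := by
      rw [div_le_iff₀ (by positivity : (0:ℝ) < 16 * (n:ℝ) ^ 2 * L₀')]
      have h1 : L₁ ^ 2 * r ^ 3 < 2 * ε * L₀' * (n:ℝ) := by
        rw [div_lt_iff₀ (by positivity)] at hn2; linarith
      have h2 : ((n:ℝ) + 1) ≤ 2 * (n:ℝ) := by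
        have : (1:ℝ) ≤ (n:ℝ) := by exact_mod_cast hnpos
        linarith
      have h3 : L₁ ^ 2 * r ^ 3 * ((n:ℝ) + 1) ≤ (2 * ε * L₀' * (n:ℝ)) * (2 * (n:ℝ)) :=
        mul_le_mul h1.le h2 (by positivity) (by positivity)
      calc L₁ ^ 2 * r ^ 3 * ((n:ℝ) + 1) ≤ 2 * ε * L₀' * (n:ℝ) * (2 * (n:ℝ)) := h3
        _ = ε / 4 * (16 * (n:ℝ) ^ 2 * L₀') := by ring
    have hT1 : r * Real.sqrt (L₁ * (f x - m) + L₀' ^ 2)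
        ≤ r * Real.sqrt (L₁ * (f x - m) + L₀ ^ 2) + ε / 2 := by
      have h1 := mul_le_mul_of_nonneg_left hsq1 hrnn
      have h2 : r * (ε / (2 * r)) = ε / 2 := by field_simp
      rw [mul_add, h2] at h1
      exact h1
    linarith only [hmain, hT1, hT2, hT3]
end

section
/- Converse direction of the quadratic-growth characterization: Suppose f is convex on an open convex U ⊆ ℝ^d with m = inf_U f finite, and for every x ∈ U the upper bound f(y) ≤ f(x) + (L₁/4)‖y - x‖² + ‖y - x‖·√(L₁(f(x) - m) + L₀²) holds for all y ∈ U. Then every subgradient g ∈ ∂f(x) at any x ∈ U satisfies ‖g‖² ≤ L₀² + L₁(f(x) - m). -/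
open RealInnerProductSpace

theorem stmt_16 {d : ℕ} (U : Set (EuclideanSpace ℝ (Fin d)))
    (hUopen : IsOpen U) (hUconv : Convex ℝ U)
    (f : EuclideanSpace ℝ (Fin d) → ℝ) (hconv : ConvexOn ℝ U f)
    (L₀ L₁ : ℝ) (hL₀ : 0 ≤ L₀) (hL₁ : 0 ≤ L₁)
    (m : ℝ) (hm : IsGLB (f '' U) m)
    (hupper : ∀ x ∈ U, ∀ y ∈ U,
      f y ≤ f x + (L₁ / 4) * ‖y - x‖ ^ 2 +
        ‖y - x‖ * Real.sqrt (L₁ * (f x - m) + L₀ ^ 2)) :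
    ∀ x ∈ U, ∀ g : EuclideanSpace ℝ (Fin d),
      (∀ y ∈ U, f y ≥ f x + ⟪g, y - x⟫) → ‖g‖ ^ 2 ≤ L₀ ^ 2 + L₁ * (f x - m) := by
  intro x hx g hg
  have hfxm : m ≤ f x := hm.1 ⟨x, hx, rfl⟩
  have hS0 : 0 ≤ L₁ * (f x - m) := mul_nonneg hL₁ (by linarith)
  have hS : 0 ≤ L₁ * (f x - m) + L₀ ^ 2 := by positivity
  by_cases hg0 : g = 0
  · simp [hg0]
    nlinarith [sq_nonneg L₀]
  · have hgn : 0 < ‖g‖ := norm_pos_iff.2 hg0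
    obtain ⟨ε, hε, hball⟩ := Metric.isOpen_iff.1 hUopen x hx
    have key : ‖g‖ ≤ Real.sqrt (L₁ * (f x - m) + L₀ ^ 2) := by
      apply le_of_forall_pos_le_add
      intro δ hδ
      set t := min (ε / 2) (4 * δ / (L₁ + 1)) with ht
      have ht0 : 0 < t := lt_min (by linarith) (by positivity)
      have htδ : L₁ / 4 * t ≤ δ := by
        have h1 : t ≤ 4 * δ / (L₁ + 1) := min_le_right _ _
        have h2 : L₁ / 4 * t ≤ L₁ / 4 * (4 * δ / (L₁ + 1)) := by
          apply mul_le_mul_of_nonneg_left h1 (by positivity)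
        have h3 : L₁ / 4 * (4 * δ / (L₁ + 1)) ≤ δ := by
          rw [mul_div_assoc', div_le_iff₀ (by linarith : (0:ℝ) < L₁ + 1)]
          nlinarith
        linarith
      set u : EuclideanSpace ℝ (Fin d) := ‖g‖⁻¹ • g with hu
      have hun : ‖u‖ = 1 := by
        rw [hu, norm_smul, norm_inv, norm_norm, inv_mul_cancel₀ hgn.ne']
      set y := x + t • u with hy
      have hyx : y - x = t • u := by rw [hy]; abel
      have hyxn : ‖y - x‖ = t := by
        rw [hyx, norm_smul, hun, Real.norm_eq_abs, abs_of_pos ht0, mul_one]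
      have hyU : y ∈ U := by
        apply hball
        rw [Metric.mem_ball, dist_eq_norm, hyxn]
        calc t ≤ ε / 2 := min_le_left _ _
          _ < ε := by linarith
      have hinner : ⟪g, y - x⟫ = t * ‖g‖ := by
        rw [hyx, hu, real_inner_smul_right, real_inner_smul_right,
          real_inner_self_eq_norm_sq]
        field_simp
      have h1 : f x + t * ‖g‖ ≤ f y := by
        have := hg y hyU
        rw [hinner] at this
        linarith
      have h2 : f y ≤ f x + L₁ / 4 * t ^ 2 + t * Real.sqrt (L₁ * (f x - m) + L₀ ^ 2) := by
        have := hupper x hx y hyU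
        rwa [hyxn] at this
      have h3 : t * ‖g‖ ≤ L₁ / 4 * t ^ 2 + t * Real.sqrt (L₁ * (f x - m) + L₀ ^ 2) := by
        linarith
      have h4 : ‖g‖ ≤ L₁ / 4 * t + Real.sqrt (L₁ * (f x - m) + L₀ ^ 2) := by
        refine le_of_mul_le_mul_left ?_ ht0
        nlinarith
      linarith
    calc ‖g‖ ^ 2 ≤ Real.sqrt (L₁ * (f x - m) + L₀ ^ 2) ^ 2 :=
          pow_le_pow_left₀ (norm_nonneg g) key 2
      _ = L₁ * (f x - m) + L₀ ^ 2 := Real.sq_sqrt hS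
      _ = L₀ ^ 2 + L₁ * (f x - m) := by ring
end

section
/- Subgradient bound for quadratically regularized objectives: Let f(x) = h(x) + (λ/2)‖x‖² with h convex on ℝ^d, λ > 0, and x* a minimizer of f. If g_h(x) ∈ ∂h(x) satisfies ‖g_h(x)‖ ≤ L for all x, then ‖g_h(x) + λx‖² ≤ 6L² + 6λ(f(x) - f(x*)) for all x. -/
open RealInnerProductSpace

private lemma limit_aux (a b c : ℝ) (H : ∀ t : ℝ, 0 < t → t ≤ 1 → a ≤ b + t * c) :
    a ≤ b := by
  by_contra hab
  push_neg at hab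
  rcases le_or_gt c 0 with hc | hc
  · have := H 1 one_pos le_rfl
    linarith
  · have ht1 : (0:ℝ) < min 1 ((a - b) / (2 * c)) := by
      exact lt_min one_pos (div_pos (by linarith) (by linarith))
    have := H _ ht1 (min_le_left _ _)
    have h2 : min 1 ((a - b) / (2 * c)) * c ≤ ((a - b) / (2 * c)) * c :=
      mul_le_mul_of_nonneg_right (min_le_right _ _) hc.le
    have h3 : ((a - b) / (2 * c)) * c = (a - b) / 2 := by
      field_simp
    linarith

theorem stmt_18 {d : ℕ} (h : EuclideanSpace ℝ (Fin d) → ℝ)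
    (hconv : ConvexOn ℝ Set.univ h)
    (lam : ℝ) (hlam : 0 < lam)
    (f : EuclideanSpace ℝ (Fin d) → ℝ)
    (hf : ∀ x, f x = h x + (lam / 2) * ‖x‖ ^ 2)
    (xstar : EuclideanSpace ℝ (Fin d)) (hmin : ∀ x, f xstar ≤ f x)
    (gh : EuclideanSpace ℝ (Fin d) → EuclideanSpace ℝ (Fin d))
    (hsub : ∀ x, ∀ y, h y ≥ h x + ⟪gh x, y - x⟫)
    (L : ℝ) (hgbound : ∀ x, ‖gh x‖ ≤ L) :
    ∀ x, ‖gh x + lam • x‖ ^ 2 ≤ 6 * L ^ 2 + 6 * lam * (f x - f xstar) := by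
  have hL : (0:ℝ) ≤ L := le_trans (norm_nonneg _) (hgbound 0)
  -- subgradient inequality at xstar with subgradient -lam • xstar
  have key : ∀ x, h xstar - lam * ⟪xstar, x - xstar⟫ ≤ h x := by
    intro x
    apply limit_aux _ _ ((lam / 2) * ‖x - xstar‖ ^ 2)
    intro t ht0 ht1
    -- convexity along segment
    have hcv := hconv.2 (Set.mem_univ x) (Set.mem_univ xstar) ht0.le
      (by linarith : (0:ℝ) ≤ 1 - t) (by ring)
    set y := t • x + (1 - t) • xstar with hy
    have hmy := hmin y
    rw [hf, hf] at hmy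
    -- norm of y
    have hy2 : y = xstar + t • (x - xstar) := by
      rw [hy]; module
    have hny : ‖y‖ ^ 2 = ‖xstar‖ ^ 2 + 2 * (t * ⟪xstar, x - xstar⟫)
        + t ^ 2 * ‖x - xstar‖ ^ 2 := by
      rw [hy2]
      rw [norm_add_sq_real, real_inner_smul_right, norm_smul]
      simp [abs_of_pos ht0]
      ring
    have hyh : h y ≤ t * h x + (1 - t) * h xstar := hcv
    nlinarith [sq_nonneg t, sq_nonneg ‖x - xstar‖]
  -- lam * ‖xstar‖ ≤ L
  have hxs : lam * ‖xstar‖ ≤ L := by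
    have h1 := key 0
    have h2 := hsub 0 xstar
    have h3 : ⟪gh 0, xstar - 0⟫ ≥ -(L * ‖xstar‖) := by
      have := abs_real_inner_le_norm (gh 0) (xstar - 0)
      have hb := hgbound 0
      have := neg_abs_le ⟪gh 0, xstar - 0⟫
      have hmul : ‖gh 0‖ * ‖xstar - 0‖ ≤ L * ‖xstar‖ := by
        simp only [sub_zero]
        exact mul_le_mul_of_nonneg_right hb (norm_nonneg _)
      linarith [abs_real_inner_le_norm (gh 0) (xstar - 0)]
    have h4 : ⟪xstar, (0:EuclideanSpace ℝ (Fin d)) - xstar⟫ = -(‖xstar‖ ^ 2) := by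
      rw [zero_sub, inner_neg_right, real_inner_self_eq_norm_sq]
    rw [h4] at h1
    have h5 : lam * ‖xstar‖ ^ 2 ≤ L * ‖xstar‖ := by linarith
    rcases eq_or_lt_of_le (norm_nonneg xstar) with hz | hz
    · rw [← hz]; simpa using hL
    · nlinarith
  intro x
  -- gap lower bound
  have hgap : lam / 2 * ‖x - xstar‖ ^ 2 ≤ f x - f xstar := by
    have h1 := key x
    rw [hf, hf]
    have hnx : ‖x‖ ^ 2 = ‖xstar‖ ^ 2 + 2 * ⟪xstar, x - xstar⟫ + ‖x - xstar‖ ^ 2 := by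
      have : x = xstar + (x - xstar) := by abel
      nth_rewrite 1 [this]
      rw [norm_add_sq_real]
    nlinarith
  -- norm bound on the full subgradient
  have hnb : ‖gh x + lam • x‖ ≤ 2 * L + lam * ‖x - xstar‖ := by
    have : gh x + lam • x = gh x + lam • (x - xstar) + lam • xstar := by module
    rw [this]
    calc ‖gh x + lam • (x - xstar) + lam • xstar‖
        ≤ ‖gh x + lam • (x - xstar)‖ + ‖lam • xstar‖ := norm_add_le _ _
      _ ≤ ‖gh x‖ + ‖lam • (x - xstar)‖ + ‖lam • xstar‖ := by
          linarith [norm_add_le (gh x) (lam • (x - xstar))]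
      _ ≤ 2 * L + lam * ‖x - xstar‖ := by
          rw [norm_smul, norm_smul, Real.norm_eq_abs, abs_of_pos hlam]
          linarith [hgbound x]
  have hnn : (0:ℝ) ≤ ‖gh x + lam • x‖ := norm_nonneg _
  have hr : (0:ℝ) ≤ ‖x - xstar‖ := norm_nonneg _
  nlinarith [sq_nonneg (L - lam * ‖x - xstar‖), sq_nonneg (2 * L + lam * ‖x - xstar‖),
    mul_self_nonneg (2 * L + lam * ‖x - xstar‖ - ‖gh x + lam • x‖)]
end
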